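/- arXiv:1704.00454 — 4 statements merged into one kernel-verified Lean document; each statement's English description precedes it below -/
import Mathlib

section
/- Let d, d' ≥ 1 and let M be a d' × d real matrix with all entries strictly positive. Define a(M) := max over indices i,j ∈ Fin d', k,l ∈ Fin d of (M_{ik}·M_{jl})/(M_{jk}·M_{il}), and the contraction ratio κ(M) := (√a(M) − 1)/(√a(M) + 1). Then for all vectors p, q : Fin d → ℝ with strictly positive coordinates, ρ_BG(M·p, M·q) ≤ κ(M) · ρ_BG(p, q) (Birkhoff–Samelson contraction theorem). -/
/-! Fix two rows `i, j` of `M` and put `s k = M i k * q k`, `t k = M j k * q k` and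
`z = log p - log q`, so that `∑ s e^z = (M p)_i`. The quantity to bound is then `φ 1 - φ 0` for
`φ x = log ∑ s e^{x z} - log ∑ t e^{x z}`. Its derivative `φ' x` is the difference of the means of
`z` under the weights `s e^{x z}` and `t e^{x z}`, hence at most `osc z` times their total
variation distance. Tilting does not change cross ratios `s_k t_l / (t_k s_l) ≤ a(M)`, and under
such a bound the mass any set can gain when passing from `t` to `s` is at most
`(√a - 1) / (√a + 1)`. -/

open Finset

/-- Variation seminorm `‖x‖_var = (max_i x_i) - (min_i x_i)`. -/
noncomputable def varNorm {n : ℕ} [NeZero n] (x : Fin n → ℝ) : ℝ :=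
  univ.sup' univ_nonempty x - univ.inf' univ_nonempty x

/-- Birkhoff projective metric `ρ_BG(p,q) = ‖log p − log q‖_var`. -/
noncomputable def rhoBG {n : ℕ} [NeZero n] (p q : Fin n → ℝ) : ℝ :=
  varNorm (fun i => Real.log (p i) - Real.log (q i))

/-- `a(M) = max_{i,j,k,l} (M_{ik} M_{jl}) / (M_{jk} M_{il})` for a positive matrix. -/
noncomputable def birkhoffA {d' d : ℕ} [NeZero d'] [NeZero d]
    (M : Matrix (Fin d') (Fin d) ℝ) : ℝ :=
  (univ : Finset ((Fin d' × Fin d') × Fin d × Fin d)).sup' univ_nonempty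
    (fun x => (M x.1.1 x.2.1 * M x.1.2 x.2.2) / (M x.1.2 x.2.1 * M x.1.1 x.2.2))

/-- Birkhoff's contraction ratio `κ(M) = (√a(M) − 1)/(√a(M) + 1)`. -/
noncomputable def birkhoffKappa {d' d : ℕ} [NeZero d'] [NeZero d]
    (M : Matrix (Fin d') (Fin d) ℝ) : ℝ :=
  (Real.sqrt (birkhoffA M) - 1) / (Real.sqrt (birkhoffA M) + 1)

open Real

section CrossRatio

variable {ι : Type*}

def CrossRatioLE (a : ℝ) (s t : ι → ℝ) : Prop :=
  ∀ k l, s k * t l ≤ a * (t k * s l)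

lemma CrossRatioLE.mul_right {a : ℝ} {s t r : ι → ℝ} (hst : CrossRatioLE a s t)
    (hr : ∀ k, 0 ≤ r k) : CrossRatioLE a (fun k => s k * r k) (fun k => t k * r k) := by
  intro k l
  have := mul_le_mul_of_nonneg_right (hst k l) (mul_nonneg (hr k) (hr l))
  linarith

/- Equality at `S = √a / (√a + 1)`, `T = 1 / (√a + 1)`: this is where `κ` comes from. -/
lemma sub_le_of_mul_one_sub_le {a S T : ℝ} (ha : 1 ≤ a) (hS1 : S ≤ 1)
    (h : S * (1 - T) ≤ a * (T * (1 - S))) :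
    S - T ≤ (√a - 1) / (√a + 1) := by
  obtain ⟨A, hA, rfl⟩ : ∃ A, 1 ≤ A ∧ a = A ^ 2 :=
    ⟨√a, one_le_sqrt.2 ha, (sq_sqrt (by linarith)).symm⟩
  rw [sqrt_sq (by linarith), le_div_iff₀ (by linarith)]
  have hD : 1 ≤ A ^ 2 - (A ^ 2 - 1) * S := by nlinarith
  have hT : (S - T) * (A ^ 2 - (A ^ 2 - 1) * S) ≤ (A ^ 2 - 1) * (S * (1 - S)) := by linarith
  have hAMGM : (A ^ 2 - 1) * (S * (1 - S)) * (A + 1) ≤ (A - 1) * (A ^ 2 - (A ^ 2 - 1) * S) := by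
    nlinarith [mul_nonneg (sub_nonneg.2 hA) (sq_nonneg ((A + 1) * S - A))]
  nlinarith

variable [Fintype ι] [Nonempty ι] {a : ℝ} {s t : ι → ℝ}

lemma CrossRatioLE.sum_div_sub_sum_div_le (hs : ∀ k, 0 < s k) (ht : ∀ k, 0 < t k)
    (hst : CrossRatioLE a s t) (P : Finset ι) :
    (∑ k ∈ P, s k) / ∑ k, s k - (∑ k ∈ P, t k) / ∑ k, t k ≤ (√a - 1) / (√a + 1) := by
  classical
  obtain ⟨k⟩ := ‹Nonempty ι›
  have ha : 1 ≤ a :=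
    le_of_mul_le_mul_right (by linarith [hst k k]) (mul_pos (hs k) (ht k))
  have hS := sum_pos (fun k _ => hs k) univ_nonempty
  have hT := sum_pos (fun k _ => ht k) univ_nonempty
  have hcompl : ∀ u : ι → ℝ, ∑ l ∈ univ \ P, u l = ∑ l, u l - ∑ l ∈ P, u l :=
    fun u => sum_sdiff_eq_sub (subset_univ P)
  have hcross : (∑ k ∈ P, s k) * ∑ l ∈ univ \ P, t l ≤
      a * ((∑ k ∈ P, t k) * ∑ l ∈ univ \ P, s l) := by
    simp_rw [sum_mul_sum, mul_sum]
    exact sum_le_sum fun k _ => sum_le_sum fun l _ => hst k l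
  refine sub_le_of_mul_one_sub_le ha
    ((div_le_one hS).2 (sum_le_univ_sum_of_nonneg fun k => (hs k).le)) ?_
  rw [one_sub_div hT.ne', one_sub_div hS.ne', ← hcompl, ← hcompl, div_mul_div_comm,
    div_mul_div_comm, ← mul_div_assoc, mul_comm (∑ k, t k)]
  exact div_le_div_of_nonneg_right hcross (by positivity)

end CrossRatio

section WeightedMeans

variable {ι : Type*} [Fintype ι]

lemma sum_mul_le_mul_sum_filter_nonneg {w z : ι → ℝ} {c β : ℝ} (hw : ∑ k, w k = 0)
    (hz : ∀ k, z k ∈ Set.Icc c (c + β)) :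
    ∑ k, w k * z k ≤ β * ∑ k with 0 ≤ w k, w k := by
  classical
  have hshift : ∑ k, w k * z k = ∑ k, w k * (z k - c) := by
    simp only [mul_sub, sum_sub_distrib, ← sum_mul, hw, zero_mul, sub_zero]
  rw [hshift, mul_sum, sum_filter]
  refine sum_le_sum fun k _ => ?_
  have ⟨hzc, hzβ⟩ := hz k
  split_ifs with hwk
  · nlinarith
  · nlinarith

variable [Nonempty ι] {a c β : ℝ} {s t z : ι → ℝ}

lemma CrossRatioLE.centerMass_sub_centerMass_le (hs : ∀ k, 0 < s k) (ht : ∀ k, 0 < t k)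
    (hst : CrossRatioLE a s t) (hz : ∀ k, z k ∈ Set.Icc c (c + β)) :
    univ.centerMass s z - univ.centerMass t z ≤ (√a - 1) / (√a + 1) * β := by
  have hS := sum_pos (fun k _ => hs k) univ_nonempty
  have hT := sum_pos (fun k _ => ht k) univ_nonempty
  have hβ : 0 ≤ β := by
    obtain ⟨k⟩ := ‹Nonempty ι›
    linarith [(hz k).1, (hz k).2]
  set w : ι → ℝ := fun k => s k / ∑ l, s l - t k / ∑ l, t l
  have hw : ∑ k, w k = 0 := by
    simp only [w, sum_sub_distrib, ← sum_div, div_self hS.ne', div_self hT.ne', sub_self]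
  calc univ.centerMass s z - univ.centerMass t z = ∑ k, w k * z k := by
        simp only [centerMass, smul_eq_mul, w, sub_mul, sum_sub_distrib, div_mul_eq_mul_div,
          ← sum_div, inv_mul_eq_div]
    _ ≤ β * ∑ k with 0 ≤ w k, w k := sum_mul_le_mul_sum_filter_nonneg hw hz
    _ ≤ β * ((√a - 1) / (√a + 1)) := by
        refine mul_le_mul_of_nonneg_left ?_ hβ
        simpa only [w, sum_sub_distrib, ← sum_div] using hst.sum_div_sub_sum_div_le hs ht _
    _ = (√a - 1) / (√a + 1) * β := mul_comm _ _

lemma hasDerivAt_log_sum_mul_exp (hs : ∀ k, 0 < s k) (z : ι → ℝ) (x : ℝ) :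
    HasDerivAt (fun x => log (∑ k, s k * exp (x * z k)))
      (univ.centerMass (fun k => s k * exp (x * z k)) z) x := by
  have hsum : HasDerivAt (fun x => ∑ k, s k * exp (x * z k))
      (∑ k, s k * (exp (x * z k) * z k)) x :=
    HasDerivAt.fun_sum fun k _ => ((hasDerivAt_mul_const (z k)).exp.const_mul (s k))
  convert hsum.log (sum_pos (fun k _ => mul_pos (hs k) (exp_pos _)) univ_nonempty).ne' using 1
  simp only [centerMass, smul_eq_mul, mul_assoc, inv_mul_eq_div]

lemma CrossRatioLE.log_sum_mul_exp_sub_le (hs : ∀ k, 0 < s k) (ht : ∀ k, 0 < t k)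
    (hst : CrossRatioLE a s t) (hz : ∀ k, z k ∈ Set.Icc c (c + β)) :
    log (∑ k, s k * exp (z k)) - log (∑ k, t k * exp (z k)) -
      (log (∑ k, s k) - log (∑ k, t k)) ≤ (√a - 1) / (√a + 1) * β := by
  set φ : ℝ → ℝ := fun x => log (∑ k, s k * exp (x * z k)) - log (∑ k, t k * exp (x * z k))
  have hφ : ∀ x, HasDerivAt φ (univ.centerMass (fun k => s k * exp (x * z k)) z -
      univ.centerMass (fun k => t k * exp (x * z k)) z) x := fun x =>
    (hasDerivAt_log_sum_mul_exp hs z x).sub (hasDerivAt_log_sum_mul_exp ht z x)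
  have hφ' : ∀ x, deriv φ x ≤ (√a - 1) / (√a + 1) * β := fun x => by
    rw [(hφ x).deriv]
    exact (hst.mul_right fun k => (exp_pos _).le).centerMass_sub_centerMass_le
      (fun k => mul_pos (hs k) (exp_pos _)) (fun k => mul_pos (ht k) (exp_pos _)) hz
  simpa [φ] using
    image_sub_le_mul_sub_of_deriv_le (fun x => (hφ x).differentiableAt) hφ' zero_le_one

end WeightedMeans

lemma varNorm_le_of_forall_sub_le {n : ℕ} [NeZero n] {x : Fin n → ℝ} {C : ℝ}
    (h : ∀ i j, x i - x j ≤ C) : varNorm x ≤ C := by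
  rw [varNorm, sub_le_iff_le_add]
  obtain ⟨j, -, hj⟩ := exists_mem_eq_inf' univ_nonempty x
  exact sup'_le _ _ fun i _ => by linarith [h i j]

lemma mem_Icc_inf'_add_varNorm {n : ℕ} [NeZero n] (x : Fin n → ℝ) (k : Fin n) :
    x k ∈ Set.Icc (univ.inf' univ_nonempty x) (univ.inf' univ_nonempty x + varNorm x) := by
  rw [varNorm, add_sub_cancel]
  exact ⟨inf'_le _ (mem_univ k), le_sup' _ (mem_univ k)⟩

lemma crossRatioLE_birkhoffA {d' d : ℕ} [NeZero d'] [NeZero d] {M : Matrix (Fin d') (Fin d) ℝ}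
    (hM : ∀ i j, 0 < M i j) (i j : Fin d') : CrossRatioLE (birkhoffA M) (M i) (M j) :=
  fun k l => (div_le_iff₀ (mul_pos (hM j k) (hM i l))).1 <|
    le_sup' (fun x : (Fin d' × Fin d') × Fin d × Fin d =>
      (M x.1.1 x.2.1 * M x.1.2 x.2.2) / (M x.1.2 x.2.1 * M x.1.1 x.2.2)) (mem_univ ((i, j), (k, l)))

/-- Birkhoff–Samelson contraction theorem: a positive linear map contracts the
Birkhoff projective metric by the factor `κ(M)`. -/
theorem birkhoff_contraction (d d' : ℕ) [NeZero d] [NeZero d']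
    (M : Matrix (Fin d') (Fin d) ℝ) (hM : ∀ i j, 0 < M i j)
    (p q : Fin d → ℝ) (hp : ∀ i, 0 < p i) (hq : ∀ i, 0 < q i) :
    rhoBG (M.mulVec p) (M.mulVec q) ≤ birkhoffKappa M * rhoBG p q := by
  set g : Fin d → ℝ := fun k => log (p k) - log (q k)
  have hrow : ∀ i, ∑ k, M i k * q k * exp (g k) = M.mulVec p i := fun i =>
    sum_congr rfl fun k _ => by
      rw [exp_sub, exp_log (hp k), exp_log (hq k), mul_assoc, mul_div_cancel₀ _ (hq k).ne']
  refine varNorm_le_of_forall_sub_le fun i j => ?_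
  have key := ((crossRatioLE_birkhoffA hM i j).mul_right fun k => (hq k).le).log_sum_mul_exp_sub_le
    (fun k => mul_pos (hM i k) (hq k)) (fun k => mul_pos (hM j k) (hq k))
    (mem_Icc_inf'_add_varNorm g)
  rw [hrow, hrow] at key
  simp only [Matrix.mulVec, dotProduct] at key ⊢
  rw [birkhoffKappa, rhoBG]
  linarith
end

section
/- Let d, d' ≥ 1 and let M be a d' × d real matrix with all entries strictly positive whose columns each sum to 1 (a positive column-stochastic coarse-binning operator). Then for all vectors p, q : Fin d → ℝ with strictly positive coordinates, ρ_BG(M·p, M·q) ≤ ρ_BG(p, q), and the inequality is strict whenever ρ_BG(p,q) > 0. In particular, the Hilbert simplex metric satisfies the property of information monotonicity under coarse-graining. -/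
open Finset

/-- Information monotonicity of the Hilbert simplex (Birkhoff) metric: a positive
column-stochastic coarse-binning operator does not increase the metric, and strictly
decreases it whenever the metric is positive. -/
theorem rhoBG_information_monotonicity (d d' : ℕ) [NeZero d] [NeZero d']
    (M : Matrix (Fin d') (Fin d) ℝ) (hM : ∀ i j, 0 < M i j)
    (hstoch : ∀ j, ∑ i, M i j = 1)
    (p q : Fin d → ℝ) (hp : ∀ i, 0 < p i) (hq : ∀ i, 0 < q i) :
    rhoBG (M.mulVec p) (M.mulVec q) ≤ rhoBG p q ∧
      (0 < rhoBG p q → rhoBG (M.mulVec p) (M.mulVec q) < rhoBG p q) := by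
  classical
  set f : Fin d → ℝ := fun j => Real.log (p j) - Real.log (q j) with hfdef
  set g : Fin d' → ℝ := fun i =>
    Real.log (M.mulVec p i) - Real.log (M.mulVec q i) with hgdef
  have hMp : ∀ i, 0 < M.mulVec p i := fun i =>
    Finset.sum_pos (fun j _ => mul_pos (hM i j) (hp j)) univ_nonempty
  have hMq : ∀ i, 0 < M.mulVec q i := fun i =>
    Finset.sum_pos (fun j _ => mul_pos (hM i j) (hq j)) univ_nonempty
  have hrpos : ∀ j, 0 < p j / q j := fun j => div_pos (hp j) (hq j)
  have hflog : ∀ j, f j = Real.log (p j / q j) := fun j =>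
    (Real.log_div (hp j).ne' (hq j).ne').symm
  obtain ⟨j1, -, hj1⟩ := Finset.exists_mem_eq_sup' (univ_nonempty (α := Fin d)) f
  obtain ⟨j0, -, hj0⟩ := Finset.exists_mem_eq_inf' (univ_nonempty (α := Fin d)) f
  -- ratio bounds
  have hr1 : ∀ j, p j / q j ≤ p j1 / q j1 := by
    intro j
    have := Finset.le_sup' f (Finset.mem_univ j)
    rw [hj1] at this
    rw [hflog j, hflog j1] at this
    exact (Real.log_le_log_iff (hrpos j) (hrpos j1)).mp this
  have hr0 : ∀ j, p j0 / q j0 ≤ p j / q j := by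
    intro j
    have := Finset.inf'_le f (Finset.mem_univ j)
    rw [hj0] at this
    rw [hflog j, hflog j0] at this
    exact (Real.log_le_log_iff (hrpos j0) (hrpos j)).mp this
  -- coordinatewise p j ≤ r1 * q j, etc.
  have hub : ∀ j, p j ≤ (p j1 / q j1) * q j := fun j => by
    have h := mul_le_mul_of_nonneg_right (hr1 j) (hq j).le
    rwa [div_mul_cancel₀ _ (hq j).ne'] at h
  have hlb : ∀ j, (p j0 / q j0) * q j ≤ p j := fun j => by
    have h := mul_le_mul_of_nonneg_right (hr0 j) (hq j).le
    rwa [div_mul_cancel₀ _ (hq j).ne'] at h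
  -- mediant: bounds on Mp i / Mq i
  have hMub : ∀ i, M.mulVec p i ≤ (p j1 / q j1) * M.mulVec q i := by
    intro i
    simp only [Matrix.mulVec, dotProduct, Finset.mul_sum]
    refine Finset.sum_le_sum fun j _ => ?_
    have := mul_le_mul_of_nonneg_left (hub j) (hM i j).le
    nlinarith [this]
  have hMlb : ∀ i, (p j0 / q j0) * M.mulVec q i ≤ M.mulVec p i := by
    intro i
    simp only [Matrix.mulVec, dotProduct, Finset.mul_sum]
    refine Finset.sum_le_sum fun j _ => ?_
    have := mul_le_mul_of_nonneg_left (hlb j) (hM i j).le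
    nlinarith [this]
  -- g bounds
  have hgub : ∀ i, g i ≤ f j1 := by
    intro i
    have h1 : Real.log (M.mulVec p i) ≤ Real.log ((p j1 / q j1) * M.mulVec q i) :=
      Real.log_le_log (hMp i) (hMub i)
    rw [Real.log_mul (hrpos j1).ne' (hMq i).ne'] at h1
    rw [hflog j1]
    simp only [hgdef]
    linarith
  have hglb : ∀ i, f j0 ≤ g i := by
    intro i
    have h1 : Real.log ((p j0 / q j0) * M.mulVec q i) ≤ Real.log (M.mulVec p i) :=
      Real.log_le_log (mul_pos (hrpos j0) (hMq i)) (hMlb i)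
    rw [Real.log_mul (hrpos j0).ne' (hMq i).ne'] at h1
    rw [hflog j0]
    simp only [hgdef]
    linarith
  have hrho : rhoBG p q = f j1 - f j0 := by
    rw [rhoBG, varNorm, ← hj1, ← hj0]
  have hrho' : rhoBG (M.mulVec p) (M.mulVec q)
      = univ.sup' univ_nonempty g - univ.inf' univ_nonempty g := rfl
  constructor
  · rw [hrho, hrho']
    exact sub_le_sub (Finset.sup'_le _ g fun i _ => hgub i)
      (Finset.le_inf' _ g fun i _ => hglb i)
  · intro hpos
    rw [hrho] at hpos ⊢
    rw [hrho']
    have hflt : f j0 < f j1 := by linarith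
    have hrlt : p j0 / q j0 < p j1 / q j1 := by
      rw [hflog j0, hflog j1] at hflt
      exact (Real.log_lt_log_iff (hrpos j0) (hrpos j1)).mp hflt
    -- strict mediant
    have hMub' : ∀ i, M.mulVec p i < (p j1 / q j1) * M.mulVec q i := by
      intro i
      simp only [Matrix.mulVec, dotProduct, Finset.mul_sum]
      refine Finset.sum_lt_sum (fun j _ => ?_) ⟨j0, Finset.mem_univ j0, ?_⟩
      · have := mul_le_mul_of_nonneg_left (hub j) (hM i j).le
        nlinarith [this]
      · have h1 : p j0 < (p j1 / q j1) * q j0 := by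
          have h2 : (p j0 / q j0) * q j0 < (p j1 / q j1) * q j0 :=
            mul_lt_mul_of_pos_right hrlt (hq j0)
          rwa [div_mul_cancel₀ _ (hq j0).ne'] at h2
        nlinarith [mul_lt_mul_of_pos_left h1 (hM i j0)]
    have hMlb' : ∀ i, (p j0 / q j0) * M.mulVec q i < M.mulVec p i := by
      intro i
      simp only [Matrix.mulVec, dotProduct, Finset.mul_sum]
      refine Finset.sum_lt_sum (fun j _ => ?_) ⟨j1, Finset.mem_univ j1, ?_⟩
      · have := mul_le_mul_of_nonneg_left (hlb j) (hM i j).le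
        nlinarith [this]
      · have h1 : (p j0 / q j0) * q j1 < p j1 := by
          have h2 : (p j0 / q j0) * q j1 < (p j1 / q j1) * q j1 :=
            mul_lt_mul_of_pos_right hrlt (hq j1)
          rwa [div_mul_cancel₀ _ (hq j1).ne'] at h2
        nlinarith [mul_lt_mul_of_pos_left h1 (hM i j1)]
    have hgub' : ∀ i, g i < f j1 := by
      intro i
      have h1 : Real.log (M.mulVec p i) < Real.log ((p j1 / q j1) * M.mulVec q i) :=
        Real.log_lt_log (hMp i) (hMub' i)
      rw [Real.log_mul (hrpos j1).ne' (hMq i).ne'] at h1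
      rw [hflog j1]
      simp only [hgdef]
      linarith
    have hglb' : ∀ i, f j0 < g i := by
      intro i
      have h1 : Real.log ((p j0 / q j0) * M.mulVec q i) < Real.log (M.mulVec p i) :=
        Real.log_lt_log (mul_pos (hrpos j0) (hMq i)) (hMlb' i)
      rw [Real.log_mul (hrpos j0).ne' (hMq i).ne'] at h1
      rw [hflog j0]
      simp only [hgdef]
      linarith
    exact sub_lt_sub ((Finset.sup'_lt_iff _).mpr fun i _ => hgub' i)
      ((Finset.lt_inf'_iff _).mpr fun i _ => hglb' i)
end

section
/- Let d ≥ 1 and let p, q be points of the open probability simplex Δ^d := {λ : Fin (d+1) → ℝ | ∀ i, λ_i > 0 and Σ_i λ_i = 1}. Let φ(λ)_i := log λ_i − (1/(d+1))·Σ_j log λ_j be the log-centering map into the hyperplane V^d = {v | Σ_i v_i = 0}. Then ρ_BG(p, q) = ‖φ(p) − φ(q)‖_var; that is, the Hilbert simplex metric on Δ^d equals the variation-norm distance of the log-centered coordinates, realizing the isometry of Hilbert simplex geometry with a normed vector space. -/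
open Finset

/-- The log-centering map `φ(λ)_i = log λ_i − (1/(d+1)) Σ_j log λ_j`. -/
noncomputable def logCenter (d : ℕ) (lam : Fin (d + 1) → ℝ) : Fin (d + 1) → ℝ :=
  fun i => Real.log (lam i) - (1 / ((d : ℝ) + 1)) * ∑ j, Real.log (lam j)

lemma varNorm_sub_const {n : ℕ} [NeZero n] (f : Fin n → ℝ) (c : ℝ) :
    varNorm (fun i => f i - c) = varNorm f := by
  unfold varNorm
  rw [show (univ.sup' univ_nonempty fun i => f i - c) = univ.sup' univ_nonempty f - c from
      (map_finset_sup' (OrderIso.subRight c) _ f).symm,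
    show (univ.inf' univ_nonempty fun i => f i - c) = univ.inf' univ_nonempty f - c from
      (map_finset_inf' (OrderIso.subRight c) _ f).symm]
  ring

/-- The Hilbert simplex metric on the open probability simplex equals the variation-norm
distance of the log-centered coordinates: the isometry of Hilbert simplex geometry with
a normed vector space. -/
theorem rhoBG_eq_varNorm_logCenter (d : ℕ) (hd : 1 ≤ d) (p q : Fin (d + 1) → ℝ)
    (hp : ∀ i, 0 < p i) (hq : ∀ i, 0 < q i)
    (hps : ∑ i, p i = 1) (hqs : ∑ i, q i = 1) :
    rhoBG p q = varNorm (logCenter d p - logCenter d q) := by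
  have : (logCenter d p - logCenter d q) =
      fun i => (Real.log (p i) - Real.log (q i)) -
        (1 / ((d : ℝ) + 1)) * (∑ j, Real.log (p j) - ∑ j, Real.log (q j)) := by
    funext i
    simp only [Pi.sub_apply, logCenter]
    ring
  rw [this, varNorm_sub_const]
  rfl
end

section
/- Let C₁, C₂ be n × n real symmetric positive definite matrices, and define ρ_HG(C₁, C₂) := log(sSup S) − log(sInf S), where S := spectrum ℝ (C₁⁻¹·C₂) is the (nonempty, finite, positive) real spectrum of C₁⁻¹·C₂. Then: (i) ρ_HG(C₁, C₂) = ρ_HG(C₁⁻¹, C₂⁻¹); and (ii) for all invertible n × n real matrices A and B, spectrum ℝ ((A·C₁·B)⁻¹·(A·C₂·B)) = spectrum ℝ (C₁⁻¹·C₂), hence ρ_HG(A·C₁·B, A·C₂·B) = ρ_HG(C₁, C₂) (invariance of Hilbert's projective matrix metric under left-right multiplication by invertible matrices and under inversion). -/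
/-!
An eigenvector `C₂ v = μ C₁ v` gives `vᵀ C₂ v = μ vᵀ C₁ v`, so the spectrum of `C₁⁻¹ C₂` is
positive. Passing to `(A C₁ B, A C₂ B)` conjugates `C₁⁻¹ C₂` by `B`, and passing to
`(C₁⁻¹, C₂⁻¹)` replaces it by a conjugate of its inverse; the spectrum is inverted, which
exchanges `log sSup` and `log sInf` up to sign.
-/

/-- Hilbert's projective matrix metric
`ρ_HG(C₁, C₂) = log sSup S − log sInf S` where `S = spectrum ℝ (C₁⁻¹ C₂)`. -/
noncomputable def rhoHG {n : ℕ} (C₁ C₂ : Matrix (Fin n) (Fin n) ℝ) : ℝ :=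
  Real.log (sSup (spectrum ℝ (C₁⁻¹ * C₂))) - Real.log (sInf (spectrum ℝ (C₁⁻¹ * C₂)))

namespace Matrix

variable {ι K : Type*} [Fintype ι] [DecidableEq ι]

section Field

variable [Field K]

theorem spectrum_inv_mul_mul {B : Matrix ι ι K} (hB : IsUnit B.det) (X : Matrix ι ι K) :
    spectrum K (B⁻¹ * X * B) = spectrum K X := by
  lift B to (Matrix ι ι K)ˣ using (isUnit_iff_isUnit_det B).mpr hB
  rw [← coe_units_inv]
  exact spectrum.units_conjugate'

theorem spectrum_nonsing_inv {X : Matrix ι ι K} (hX : IsUnit X.det) :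
    spectrum K X⁻¹ = (spectrum K X)⁻¹ := by
  lift X to (Matrix ι ι K)ˣ using (isUnit_iff_isUnit_det X).mpr hX
  rw [← coe_units_inv, spectrum.map_inv]

theorem spectrum_mul_mul_inv_mul_mul_mul {A B : Matrix ι ι K} (hA : IsUnit A.det)
    (hB : IsUnit B.det) (C₁ C₂ : Matrix ι ι K) :
    spectrum K ((A * C₁ * B)⁻¹ * (A * C₂ * B)) = spectrum K (C₁⁻¹ * C₂) := by
  have hconj : (A * C₁ * B)⁻¹ * (A * C₂ * B) = B⁻¹ * (C₁⁻¹ * C₂) * B := by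
    simp only [mul_inv_rev, Matrix.mul_assoc, nonsing_inv_mul_cancel_left A _ hA]
  rw [hconj, spectrum_inv_mul_mul hB]

theorem spectrum_inv_inv_mul_inv {C₁ C₂ : Matrix ι ι K} (h₁ : IsUnit C₁.det)
    (h₂ : IsUnit C₂.det) : spectrum K (C₁⁻¹⁻¹ * C₂⁻¹) = (spectrum K (C₁⁻¹ * C₂))⁻¹ := by
  have hconj : C₁⁻¹⁻¹ * C₂⁻¹ = C₂⁻¹⁻¹ * (C₁⁻¹ * C₂)⁻¹ * C₂⁻¹ := by
    simp only [mul_inv_rev, nonsing_inv_nonsing_inv _ h₁, nonsing_inv_nonsing_inv _ h₂,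
      mul_nonsing_inv_cancel_left C₂ _ h₂]
  have hX : IsUnit (C₁⁻¹ * C₂).det := by
    rw [det_mul]; exact (isUnit_nonsing_inv_det C₁ h₁).mul h₂
  rw [hconj, spectrum_inv_mul_mul (isUnit_nonsing_inv_det C₂ h₂), spectrum_nonsing_inv hX]

end Field

theorem PosDef.pos_of_mem_spectrum_inv_mul {C₁ C₂ : Matrix ι ι ℝ} (h₁ : C₁.PosDef)
    (h₂ : C₂.PosDef) {μ : ℝ} (hμ : μ ∈ spectrum ℝ (C₁⁻¹ * C₂)) : 0 < μ := by
  rw [← spectrum_toLin', ← Module.End.hasEigenvalue_iff_mem_spectrum] at hμ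
  obtain ⟨v, hv, hv0⟩ := hμ.exists_hasEigenvector
  rw [Module.End.mem_eigenspace_iff, toLin'_apply, ← mulVec_mulVec] at hv
  have hC₂v : C₂ *ᵥ v = μ • (C₁ *ᵥ v) := by
    rw [← mulVec_smul, ← hv, mulVec_mulVec, mul_nonsing_inv _ h₁.det_pos.ne'.isUnit, one_mulVec]
  have := h₂.dotProduct_mulVec_pos hv0
  rw [hC₂v, dotProduct_smul, smul_eq_mul] at this
  exact pos_of_mul_pos_left this (h₁.dotProduct_mulVec_pos hv0).le

end Matrix

theorem Real.sSup_inv_of_finite {S : Set ℝ} (hS : S.Finite) (hpos : ∀ x ∈ S, 0 < x) :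
    sSup S⁻¹ = (sInf S)⁻¹ := by
  rcases S.eq_empty_or_nonempty with rfl | hne
  · simp
  have hmem : sInf S ∈ S := hne.csInf_mem hS
  refine IsGreatest.csSup_eq ⟨by simpa using hmem, fun x hx => ?_⟩
  calc x = x⁻¹⁻¹ := (inv_inv x).symm
    _ ≤ (sInf S)⁻¹ := inv_anti₀ (hpos _ hmem) (csInf_le hS.bddBelow hx)

theorem Real.sInf_inv_of_finite {S : Set ℝ} (hS : S.Finite) (hpos : ∀ x ∈ S, 0 < x) :
    sInf S⁻¹ = (sSup S)⁻¹ := by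
  have h := sSup_inv_of_finite hS.inv fun x hx => inv_pos.mp (hpos _ hx)
  rw [inv_inv] at h
  rw [h, inv_inv]

/-- Invariance of Hilbert's projective matrix metric under inversion and under
left-right multiplication by invertible matrices. -/
theorem rhoHG_invariance (n : ℕ) (C₁ C₂ : Matrix (Fin n) (Fin n) ℝ)
    (h₁ : C₁.PosDef) (h₂ : C₂.PosDef) :
    rhoHG C₁ C₂ = rhoHG C₁⁻¹ C₂⁻¹ ∧
    ∀ A B : Matrix (Fin n) (Fin n) ℝ, IsUnit A.det → IsUnit B.det →
      spectrum ℝ ((A * C₁ * B)⁻¹ * (A * C₂ * B)) = spectrum ℝ (C₁⁻¹ * C₂) ∧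
      rhoHG (A * C₁ * B) (A * C₂ * B) = rhoHG C₁ C₂ := by
  have hfin : (spectrum ℝ (C₁⁻¹ * C₂)).Finite := Matrix.finite_real_spectrum
  have hpos : ∀ μ ∈ spectrum ℝ (C₁⁻¹ * C₂), 0 < μ := fun _ =>
    h₁.pos_of_mem_spectrum_inv_mul h₂
  refine ⟨?_, fun A B hA hB => ?_⟩
  · rw [rhoHG, rhoHG,
      Matrix.spectrum_inv_inv_mul_inv h₁.det_pos.ne'.isUnit h₂.det_pos.ne'.isUnit,
      Real.sSup_inv_of_finite hfin hpos, Real.sInf_inv_of_finite hfin hpos,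
      Real.log_inv, Real.log_inv]
    ring
  · have hspec := Matrix.spectrum_mul_mul_inv_mul_mul_mul hA hB C₁ C₂
    exact ⟨hspec, by rw [rhoHG, rhoHG, hspec]⟩
end
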